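/- For any finite set {t_1, …, t_u} of odd positive integers, there exists a shift-invariant function f (a sum of γ functions) with ξ(f) = {2t_1, …, 2t_u}; equivalently, for each odd t there exists an irreducible polynomial g ∈ 𝔽₂[X] with ord(g) = t. -/

import Mathlib

open Finset Polynomial

/-- The cyclic left shift on `𝔽₂ⁿ`. -/
def cshift (n : ℕ) (x : Fin n → ZMod 2) : Fin n → ZMod 2 :=
  fun i => x ⟨(i.val + 1) % n, Nat.mod_lt _ (Nat.lt_of_le_of_lt (Nat.zero_le i.val) i.isLt)⟩

/-- `gamma n k` is the function `γ_{2k} = S^{2k} ⊙ (𝟙+S^{2k-1}) ⊙ … ⊙ (𝟙+S)` on `𝔽₂ⁿ`;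
`gamma n 0 = id`. -/
def gamma (n k : ℕ) (x : Fin n → ZMod 2) : Fin n → ZMod 2 :=
  fun i => (cshift n)^[2 * k] x i * ∏ j ∈ Finset.range k, (1 + (cshift n)^[2 * j + 1] x i)

/-- The shift-invariant function on 𝔽₂ⁿ attached (for every n) to a binary polynomial F with
F(0) = 1, namely f = Σ_i F_i γ_{2i}. -/
def gammaComb (F : Polynomial (ZMod 2)) (n : ℕ) : (Fin n → ZMod 2) → Fin n → ZMod 2 :=
  fun x => ∑ i ∈ Finset.range (F.natDegree + 1), F.coeff i • gamma n i x

/-- The order of a binary polynomial g with g(0) = 1: the least positive ℓ with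
g dividing X^ℓ + 1. -/
noncomputable def polyOrd (g : Polynomial (ZMod 2)) : ℕ :=
  sInf {ℓ : ℕ | 0 < ℓ ∧ g ∣ (X : Polynomial (ZMod 2)) ^ ℓ + 1}

/-!
Read a word `x ∈ 𝔽₂ⁿ` as an `n`-periodic sequence and write `f_F = Σ F_k γ_{2k}`. On arbitrary
sequences `f_F ∘ f_G = f_{FG}` whenever `G(0) = 1`, because the window `∏_{j<k} (1 + u_{c+2j+1})`
of `γ_{2k}` at `c` is the same for `u` and for `f_G u` wherever `(f_G u)_{c+2k} ≠ 0`. On `n`-periodic sequences `γ_{2k}` vanishes for `2k > n`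
when `n` is odd, and `γ_{2k+n} = γ_{2k}` for `k ≥ n/2` when `n = 2s` is even, so `f_F` is the
identity as soon as `F ≡ 1` modulo `X^{(n+1)/2}`, resp. `X^s (X^{2s} + 1) = X^s (X^s + 1)^2`.
Hence `f_F` is bijective for odd `n`, and for `n = 2s` when `F` is coprime to `X^s + 1`.
Conversely, if `g ∣ F` is a nonunit with `g h = X^s + 1`, the word `h(T) ρ`, with `T` the shift by
two and `ρ` the indicator of `2sℕ`, is nonzero and killed by `f_F`.

Taking for `F` the product of irreducible polynomials `g_t` of order `t` (minimal polynomials of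
primitive `t`-th roots of unity over `𝔽₂`), `f_F` fails to be bijective on `𝔽₂ⁿ` exactly when some
`g_t` divides `X^{n/2} + 1`, i.e. when `2t ∣ n`.
-/

theorem zmod_two_ne_zero_iff (a : ZMod 2) : a ≠ 0 ↔ a = 1 := by
  revert a
  decide

section Sequences

variable (u : ℕ → ZMod 2)

def oddWindow (c k : ℕ) : ZMod 2 := ∏ j ∈ range k, (1 + u (c + (2 * j + 1)))

-- `γ_{2k}` on one-sided sequences; `toSeq_gamma` recovers `gamma` on periodic extensions.
def gammaSeq (k : ℕ) : ℕ → ZMod 2 := fun c => u (c + 2 * k) * oddWindow u c k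

def gammaSeqComb : (ZMod 2)[X] →ₗ[ZMod 2] ℕ → ZMod 2 :=
  lsum fun k => LinearMap.toSpanSingleton (ZMod 2) _ (gammaSeq u k)

variable {u}

theorem gammaSeqComb_monomial (k : ℕ) (a : ZMod 2) :
    gammaSeqComb u (monomial k a) = a • gammaSeq u k := by
  simp [gammaSeqComb, sum_monomial_index]

theorem gammaSeqComb_X_pow (k : ℕ) : gammaSeqComb u (X ^ k) = gammaSeq u k := by
  rw [X_pow_eq_monomial, gammaSeqComb_monomial, one_smul]

theorem gammaSeqComb_apply (F : (ZMod 2)[X]) {N : ℕ} (hN : F.natDegree < N) (c : ℕ) :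
    gammaSeqComb u F c = ∑ k ∈ range N, F.coeff k * gammaSeq u k c := by
  rw [gammaSeqComb, lsum_apply, sum_over_range' F (fun _ => map_zero _) N hN, Finset.sum_apply]
  simp

theorem gammaSeqComb_one : gammaSeqComb u 1 = u := by
  ext c
  rw [← pow_zero X, gammaSeqComb_X_pow]
  simp [gammaSeq, oddWindow]

theorem oddWindow_eq_one_iff {c k : ℕ} :
    oddWindow u c k = 1 ↔ ∀ j < k, u (c + (2 * j + 1)) = 0 := by
  have h (a : ZMod 2) : 1 + a = 0 ↔ ¬a = 0 := by revert a; decide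
  rw [← zmod_two_ne_zero_iff, ne_eq, oddWindow, Finset.prod_eq_zero_iff]
  simp [h]

theorem oddWindow_congr {v : ℕ → ZMod 2} {c c' k k' : ℕ}
    (h : (∀ j < k, u (c + (2 * j + 1)) = 0) ↔ ∀ j < k', v (c' + (2 * j + 1)) = 0) :
    oddWindow u c k = oddWindow v c' k' := by
  rw [← oddWindow_eq_one_iff, ← oddWindow_eq_one_iff] at h
  revert h
  generalize oddWindow u c k = a
  generalize oddWindow v c' k' = b
  revert a b
  decide

theorem oddWindow_add (c k j : ℕ) :
    oddWindow u c (k + j) = oddWindow u c k * oddWindow u (c + 2 * k) j := by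
  simp only [oddWindow, prod_range_add]
  congr 1
  refine prod_congr rfl fun i _ => ?_
  ring_nf

theorem gammaSeq_add (k j c : ℕ) :
    gammaSeq u (k + j) c = oddWindow u c k * gammaSeq u j (c + 2 * k) := by
  simp only [gammaSeq, oddWindow_add]
  rw [show c + 2 * (k + j) = c + 2 * k + 2 * j by ring]
  ring

theorem gammaSeqComb_X_pow_mul (k : ℕ) (G : (ZMod 2)[X]) (c : ℕ) :
    gammaSeqComb u (X ^ k * G) c = oddWindow u c k * gammaSeqComb u G (c + 2 * k) := by
  induction G using Polynomial.induction_on' with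
  | add p q hp hq => simp only [mul_add, map_add, Pi.add_apply, hp, hq]
  | monomial j a =>
    simp only [X_pow_mul_monomial, gammaSeqComb_monomial, Pi.smul_apply, smul_eq_mul,
      add_comm j k, gammaSeq_add]
    ring

theorem gammaSeq_ne_zero_iff {k c : ℕ} :
    gammaSeq u k c ≠ 0 ↔ u (c + 2 * k) = 1 ∧ ∀ j < k, u (c + (2 * j + 1)) = 0 := by
  rw [gammaSeq, ne_eq, mul_eq_zero, not_or, ← ne_eq, ← ne_eq, zmod_two_ne_zero_iff,
    zmod_two_ne_zero_iff, oddWindow_eq_one_iff]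

theorem gammaSeq_eq_zero_of_blocked {c e : ℕ} (h0 : ∀ j ≤ e, u (c + 2 * j) = 0)
    (h1 : u (c + (2 * e + 1)) = 1) (k : ℕ) : gammaSeq u k c = 0 := by
  by_contra hk
  obtain ⟨hk1, hk0⟩ := gammaSeq_ne_zero_iff.1 hk
  rcases le_or_gt k e with hke | hke
  · rw [h0 k hke] at hk1
    exact zero_ne_one hk1
  · rw [hk0 e hke] at h1
    exact zero_ne_one h1

theorem gammaSeqComb_eq_zero_of_blocked {c e : ℕ} (h0 : ∀ j ≤ e, u (c + 2 * j) = 0)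
    (h1 : u (c + (2 * e + 1)) = 1) (G : (ZMod 2)[X]) : gammaSeqComb u G c = 0 := by
  rw [gammaSeqComb_apply G (Nat.lt_succ_self _)]
  exact sum_eq_zero fun k _ => by rw [gammaSeq_eq_zero_of_blocked h0 h1, mul_zero]

theorem exists_gammaSeq_ne_zero {G : (ZMod 2)[X]} {c : ℕ} (h : gammaSeqComb u G c ≠ 0) :
    ∃ k, G.coeff k ≠ 0 ∧ gammaSeq u k c ≠ 0 := by
  rw [gammaSeqComb_apply G (Nat.lt_succ_self _)] at h
  obtain ⟨k, -, hk⟩ := exists_ne_zero_of_sum_ne_zero h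
  exact ⟨k, left_ne_zero_of_mul hk, right_ne_zero_of_mul hk⟩

-- A nonzero `γ_{2k}` at `c + 2m` gives zeros at the odd offsets below `2(m + k)` and a `1` at
-- `2(m + k)`, which blocks every term at the odd offsets `2l + 1 < 2m`.
theorem gammaSeqComb_odd_eq_zero_of_odd_eq_zero {G : (ZMod 2)[X]} {c m : ℕ}
    (hy : gammaSeqComb u G (c + 2 * m) ≠ 0) (hu : ∀ l < m, u (c + (2 * l + 1)) = 0) :
    ∀ l < m, gammaSeqComb u G (c + (2 * l + 1)) = 0 := by
  intro l hl
  obtain ⟨k, -, hk⟩ := exists_gammaSeq_ne_zero hy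
  obtain ⟨hk1, hk0⟩ := gammaSeq_ne_zero_iff.1 hk
  refine gammaSeqComb_eq_zero_of_blocked (e := m + k - l - 1) (fun j hj => ?_) ?_ G
  · rcases lt_or_ge (l + j) m with h | h
    · rw [show c + (2 * l + 1) + 2 * j = c + (2 * (l + j) + 1) by ring]
      exact hu _ h
    · rw [show c + (2 * l + 1) + 2 * j = c + 2 * m + (2 * (l + j - m) + 1) by omega]
      exact hk0 _ (by omega)
  · rwa [show c + (2 * l + 1) + (2 * (m + k - l - 1) + 1) = c + 2 * m + 2 * k by omega]

-- Let `2Q + 1 < 2m` be the last odd offset where `u` is `1`. Since `f_G u` vanishes there and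
-- `G(0) = 1`, some `γ_{2k}` with `k ≥ 1` is nonzero there; its zeros at the even offsets up to
-- `2(Q + k) ≥ 2m` and its `1` at `2(Q + k) + 1` block every term at `c + 2m`.
theorem odd_eq_zero_of_gammaSeqComb_odd_eq_zero {G : (ZMod 2)[X]} (hG : G.coeff 0 = 1) {c m : ℕ}
    (hy : gammaSeqComb u G (c + 2 * m) ≠ 0)
    (hY : ∀ l < m, gammaSeqComb u G (c + (2 * l + 1)) = 0) :
    ∀ l < m, u (c + (2 * l + 1)) = 0 := by
  by_contra! h
  obtain ⟨Q, hQ, hQmax⟩ := ((range m).filter fun l => u (c + (2 * l + 1)) ≠ 0).exists_max_image id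
    (by simpa [Finset.Nonempty] using h)
  simp only [mem_filter, mem_range, id] at hQ hQmax
  have hsub : gammaSeqComb u (G - 1) (c + (2 * Q + 1)) ≠ 0 := by
    rw [map_sub, gammaSeqComb_one, Pi.sub_apply, hY Q hQ.1, zero_sub, neg_ne_zero]
    exact hQ.2
  obtain ⟨k, hk, hk'⟩ := exists_gammaSeq_ne_zero hsub
  have hk0 : k ≠ 0 := by
    rintro rfl
    simp [hG] at hk
  obtain ⟨hk1, hkz⟩ := gammaSeq_ne_zero_iff.1 hk'
  have hQk : m ≤ Q + k := by
    by_contra! hlt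
    have := hQmax (Q + k) ⟨hlt, by
      rw [show c + (2 * (Q + k) + 1) = c + (2 * Q + 1) + 2 * k by ring, hk1]; exact one_ne_zero⟩
    omega
  refine hy (gammaSeqComb_eq_zero_of_blocked (e := Q + k - m) (fun j hj => ?_) ?_ G)
  · rw [show c + 2 * m + 2 * j = c + (2 * Q + 1) + (2 * (m + j - Q - 1) + 1) by omega]
    exact hkz _ (by omega)
  · rwa [show c + 2 * m + (2 * (Q + k - m) + 1) = c + (2 * Q + 1) + 2 * k by omega]

theorem oddWindow_gammaSeqComb {G : (ZMod 2)[X]} (hG : G.coeff 0 = 1) {c m : ℕ}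
    (hy : gammaSeqComb u G (c + 2 * m) ≠ 0) :
    oddWindow (gammaSeqComb u G) c m = oddWindow u c m :=
  oddWindow_congr
    ⟨odd_eq_zero_of_gammaSeqComb_odd_eq_zero hG hy, gammaSeqComb_odd_eq_zero_of_odd_eq_zero hy⟩

theorem gammaSeq_gammaSeqComb {G : (ZMod 2)[X]} (hG : G.coeff 0 = 1) (k : ℕ) :
    gammaSeq (gammaSeqComb u G) k = gammaSeqComb u (X ^ k * G) := by
  ext c
  rw [gammaSeqComb_X_pow_mul, gammaSeq]
  by_cases hy : gammaSeqComb u G (c + 2 * k) = 0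
  · rw [hy, zero_mul, mul_zero]
  · rw [oddWindow_gammaSeqComb hG hy, mul_comm]

theorem gammaSeqComb_gammaSeqComb {G : (ZMod 2)[X]} (hG : G.coeff 0 = 1) (F : (ZMod 2)[X]) :
    gammaSeqComb (gammaSeqComb u G) F = gammaSeqComb u (F * G) := by
  induction F using Polynomial.induction_on' with
  | add p q hp hq => rw [map_add, hp, hq, add_mul, map_add]
  | monomial k a =>
    rw [gammaSeqComb_monomial, gammaSeq_gammaSeqComb hG, ← C_mul_X_pow_eq_monomial, mul_assoc,
      ← smul_eq_C_mul, map_smul]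

end Sequences

section Periodic

variable {u : ℕ → ZMod 2}

theorem gammaSeq_eq_zero_of_odd {n : ℕ} (hu : Function.Periodic u n) (hn : Odd n) {k : ℕ}
    (hk : n < 2 * k) : gammaSeq u k = 0 := by
  obtain ⟨d, rfl⟩ := hn
  ext c
  have hmem : k - d - 1 ∈ range k := mem_range.2 (by omega)
  have hper : u (c + 2 * k) = u (c + (2 * (k - d - 1) + 1)) := by
    rw [show c + 2 * k = c + (2 * (k - d - 1) + 1) + (2 * d + 1) by omega, hu]
  rw [gammaSeq, oddWindow, ← mul_prod_erase _ _ hmem, hper, ← mul_assoc,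
    (by decide : ∀ a : ZMod 2, a * (1 + a) = 0), zero_mul, Pi.zero_apply]

theorem oddWindow_add_of_periodic {s : ℕ} (hs : 0 < s) (hu : Function.Periodic u (2 * s))
    {k : ℕ} (hk : s ≤ k) (c j : ℕ) : oddWindow u c (k + j) = oddWindow u c k := by
  refine oddWindow_congr ⟨fun h i hi => h i (by omega), fun h i _ => ?_⟩
  induction i using Nat.strong_induction_on with
  | _ i ih =>
    rcases lt_or_ge i k with hik | hik
    · exact h i hik
    · rw [show c + (2 * i + 1) = c + (2 * (i - s) + 1) + 2 * s by omega, hu]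
      exact ih (i - s) (by omega) (by omega)

theorem gammaSeq_add_of_periodic {s : ℕ} (hs : 0 < s) (hu : Function.Periodic u (2 * s))
    {k : ℕ} (hk : s ≤ k) : gammaSeq u (k + s) = gammaSeq u k := by
  ext c
  rw [gammaSeq, gammaSeq, oddWindow_add_of_periodic hs hu hk,
    show c + 2 * (k + s) = c + 2 * k + 2 * s by ring, hu]

theorem gammaSeqComb_mul_eq_zero {M : (ZMod 2)[X]} (h : ∀ j, gammaSeqComb u (M * X ^ j) = 0)
    (B : (ZMod 2)[X]) : gammaSeqComb u (M * B) = 0 := by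
  induction B using Polynomial.induction_on' with
  | add p q hp hq => rw [mul_add, map_add, hp, hq, add_zero]
  | monomial j a =>
    rw [← C_mul_X_pow_eq_monomial, mul_left_comm, ← smul_eq_C_mul, map_smul, h, smul_zero]

theorem gammaSeqComb_X_pow_mul_eq_zero {d : ℕ} (hu : Function.Periodic u (2 * d + 1))
    (B : (ZMod 2)[X]) : gammaSeqComb u (X ^ (d + 1) * B) = 0 :=
  gammaSeqComb_mul_eq_zero (fun j => by
    rw [← pow_add, gammaSeqComb_X_pow, gammaSeq_eq_zero_of_odd hu ⟨d, rfl⟩ (by omega)]) B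

theorem gammaSeqComb_X_pow_mul_X_pow_add_one_mul_eq_zero {s : ℕ} (hs : 0 < s)
    (hu : Function.Periodic u (2 * s)) (B : (ZMod 2)[X]) :
    gammaSeqComb u (X ^ s * (X ^ (2 * s) + 1) * B) = 0 :=
  gammaSeqComb_mul_eq_zero (fun j => by
    rw [show (X ^ s * (X ^ (2 * s) + 1) * X ^ j : (ZMod 2)[X]) = X ^ (s + j + s + s) + X ^ (s + j)
      by ring, map_add, gammaSeqComb_X_pow, gammaSeqComb_X_pow, gammaSeq_add_of_periodic hs hu
      (by omega), gammaSeq_add_of_periodic hs hu (by omega), CharTwo.add_self_eq_zero]) B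

theorem gammaSeq_periodic {n : ℕ} (hu : Function.Periodic u n) (k : ℕ) :
    Function.Periodic (gammaSeq u k) n := fun c => by
  simp only [gammaSeq, oddWindow, add_right_comm c n, show ∀ m, u (m + n) = u m from hu]

end Periodic

section Circular

variable {n : ℕ} [NeZero n]

def toSeq (x : Fin n → ZMod 2) : ℕ → ZMod 2 := fun a => x (Fin.ofNat n a)

theorem toSeq_mod (x : Fin n → ZMod 2) (a : ℕ) : toSeq x (a % n) = toSeq x a := by
  simp only [toSeq, Fin.ofNat, Nat.mod_mod]

theorem toSeq_periodic (x : Fin n → ZMod 2) : Function.Periodic (toSeq x) n := fun a => by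
  rw [← toSeq_mod, Nat.add_mod_right, toSeq_mod]

theorem toSeq_val (x : Fin n → ZMod 2) (i : Fin n) : toSeq x i.val = x i := by
  simp only [toSeq, Fin.ofNat, Nat.mod_eq_of_lt i.isLt]

theorem toSeq_injective : Function.Injective (toSeq (n := n)) := fun x y h =>
  funext fun i => (toSeq_val x i).symm.trans (by rw [h, toSeq_val])

theorem cshift_iterate_apply (x : Fin n → ZMod 2) (m : ℕ) (i : Fin n) :
    (cshift n)^[m] x i = toSeq x (i.val + m) := by
  induction m generalizing x with
  | zero => rw [Function.iterate_zero_apply, add_zero, toSeq_val]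
  | succ m ih =>
    rw [Function.iterate_succ_apply, ih]
    simp only [toSeq, cshift, Fin.ofNat, Nat.mod_add_mod, add_assoc]

theorem toSeq_gamma (k : ℕ) (x : Fin n → ZMod 2) :
    toSeq (gamma n k x) = gammaSeq (toSeq x) k := by
  ext a
  rw [← (gammaSeq_periodic (toSeq_periodic x) k).map_mod_nat]
  simp only [toSeq, gamma, cshift_iterate_apply, Fin.val_ofNat, gammaSeq, oddWindow]

theorem toSeq_gammaComb (F : (ZMod 2)[X]) (x : Fin n → ZMod 2) :
    toSeq (gammaComb F n x) = gammaSeqComb (toSeq x) F := by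
  ext a
  rw [gammaSeqComb_apply F (Nat.lt_succ_self _)]
  simp only [toSeq, gammaComb, Finset.sum_apply, Pi.smul_apply, smul_eq_mul]
  exact sum_congr rfl fun k _ => by rw [← toSeq_gamma k x]; rfl

theorem gammaComb_gammaComb {G : (ZMod 2)[X]} (hG : G.coeff 0 = 1) (F : (ZMod 2)[X])
    (x : Fin n → ZMod 2) : gammaComb F n (gammaComb G n x) = gammaComb (F * G) n x :=
  toSeq_injective (by rw [toSeq_gammaComb, toSeq_gammaComb, toSeq_gammaComb,
    gammaSeqComb_gammaSeqComb hG])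

end Circular

theorem isCoprime_X_of_coeff_zero_eq_one {F : (ZMod 2)[X]} (hF : F.coeff 0 = 1) :
    IsCoprime F X :=
  (irreducible_X.coprime_iff_not_dvd.2 (by rw [X_dvd_iff, hF]; exact one_ne_zero)).symm

theorem bijective_gammaComb_of_isCoprime {n : ℕ} [NeZero n] {M F : (ZMod 2)[X]}
    (hM : ∀ (x : Fin n → ZMod 2) (B : (ZMod 2)[X]), gammaSeqComb (toSeq x) (M * B) = 0)
    (hXM : X ∣ M) (hF : IsCoprime F M) : Function.Bijective (gammaComb F n) := by
  obtain ⟨a, b, hab⟩ := hF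
  have ha : a.coeff 0 = 1 := by
    have := congrArg (coeff · 0) hab
    simp only [coeff_add, mul_coeff_zero, X_dvd_iff.1 hXM, mul_zero, add_zero,
      coeff_one_zero] at this
    exact (zmod_two_ne_zero_iff _).1 (left_ne_zero_of_mul_eq_one this)
  refine Finite.surjective_iff_bijective.1 fun z => ⟨gammaComb a n z, toSeq_injective ?_⟩
  rw [gammaComb_gammaComb ha, toSeq_gammaComb, show F * a = 1 - M * b by linear_combination hab,
    map_sub, gammaSeqComb_one, hM, sub_zero]

theorem bijective_gammaComb_of_odd {n : ℕ} (hn : Odd n) {F : (ZMod 2)[X]}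
    (hF : F.coeff 0 = 1) : Function.Bijective (gammaComb F n) := by
  obtain ⟨d, rfl⟩ := hn
  exact bijective_gammaComb_of_isCoprime
    (fun x => gammaSeqComb_X_pow_mul_eq_zero (toSeq_periodic x)) (dvd_pow_self X d.succ_ne_zero)
    (isCoprime_X_of_coeff_zero_eq_one hF).pow_right

theorem bijective_gammaComb_of_isCoprime_X_pow_add_one {s : ℕ} (hs : 0 < s)
    {F : (ZMod 2)[X]} (hF0 : F.coeff 0 = 1) (hF : IsCoprime F (X ^ s + 1)) :
    Function.Bijective (gammaComb F (2 * s)) := by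
  have : NeZero (2 * s) := ⟨by omega⟩
  have hsq : (X ^ (2 * s) + 1 : (ZMod 2)[X]) = (X ^ s + 1) ^ 2 := by
    rw [CharTwo.add_sq, one_pow, ← pow_mul, mul_comm]
  refine bijective_gammaComb_of_isCoprime
    (fun x => gammaSeqComb_X_pow_mul_X_pow_add_one_mul_eq_zero hs (toSeq_periodic x))
    (dvd_mul_of_dvd_left (dvd_pow_self X hs.ne') _) ?_
  rw [hsq]
  exact (isCoprime_X_of_coeff_zero_eq_one hF0).pow_right.mul_right hF.pow_right

def shiftTwo : Module.End (ZMod 2) (ℕ → ZMod 2) := LinearMap.funLeft (ZMod 2) (ZMod 2) (· + 2)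

theorem shiftTwo_pow_apply (k : ℕ) (w : ℕ → ZMod 2) (c : ℕ) :
    (shiftTwo ^ k) w c = w (c + 2 * k) := by
  induction k generalizing w c with
  | zero => rfl
  | succ k ih =>
    rw [pow_succ, Module.End.mul_apply, ih]
    exact congrArg w (by ring)

-- On sequences vanishing at odd positions every `oddWindow` at an even position is `1`.
theorem gammaSeqComb_eq_aeval_shiftTwo {w : ℕ → ZMod 2} (hw : ∀ c, w (2 * c + 1) = 0)
    (P : (ZMod 2)[X]) : gammaSeqComb w P = aeval shiftTwo P w := by
  have hgamma (k : ℕ) : gammaSeq w k = (shiftTwo ^ k) w := by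
    ext c
    rw [shiftTwo_pow_apply, gammaSeq]
    obtain ⟨e, rfl | rfl⟩ := Nat.even_or_odd' c
    · rw [(oddWindow_eq_one_iff).2 fun j _ => by rw [← hw (e + j)]; ring_nf, mul_one]
    · rw [show 2 * e + 1 + 2 * k = 2 * (e + k) + 1 by ring, hw, zero_mul]
  induction P using Polynomial.induction_on' with
  | add p q hp hq => rw [map_add, map_add, hp, hq, LinearMap.add_apply]
  | monomial k a =>
    rw [gammaSeqComb_monomial, aeval_monomial, hgamma, Module.End.mul_apply,
      Module.algebraMap_end_apply]

theorem aeval_shiftTwo_apply (P : (ZMod 2)[X]) (w : ℕ → ZMod 2) (c : ℕ) :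
    aeval shiftTwo P w c = ∑ k ∈ range (P.natDegree + 1), P.coeff k * w (c + 2 * k) := by
  simp [aeval_eq_sum_range, LinearMap.sum_apply, Finset.sum_apply, shiftTwo_pow_apply]

theorem X_pow_add_one_ne_zero {s : ℕ} (hs : 0 < s) : (X ^ s + 1 : (ZMod 2)[X]) ≠ 0 := by
  simpa using X_pow_add_C_ne_zero hs (1 : ZMod 2)

theorem natDegree_lt_of_X_pow_add_one_eq_mul {s : ℕ} (hs : 0 < s) {g h : (ZMod 2)[X]}
    (hgu : ¬IsUnit g) (hgh : X ^ s + 1 = g * h) : h.natDegree < s := by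
  have hg0 : g ≠ 0 := by rintro rfl; exact X_pow_add_one_ne_zero hs (by rw [hgh, zero_mul])
  have hh0 : h ≠ 0 := by rintro rfl; exact X_pow_add_one_ne_zero hs (by rw [hgh, mul_zero])
  have hsum := congrArg natDegree hgh
  rw [natDegree_mul hg0 hh0, ← C_1, natDegree_X_pow_add_C] at hsum
  have := natDegree_pos_iff_degree_pos.2 (degree_pos_of_ne_zero_of_nonunit hg0 hgu)
  omega

-- The witness is `h(T) ρ` with `g h = X^s + 1` and `ρ` the indicator of `2sℕ`: `T^s ρ = ρ` gives
-- `F(T) h(T) ρ = 0`, and at `2(s - deg h)` only the leading coefficient of `h` contributes.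
theorem exists_ne_zero_aeval_shiftTwo_eq_zero {s : ℕ} (hs : 0 < s) {F g : (ZMod 2)[X]}
    (hgF : g ∣ F) (hg : g ∣ X ^ s + 1) (hgu : ¬IsUnit g) :
    ∃ z : ℕ → ZMod 2, z ≠ 0 ∧ Function.Periodic z (2 * s) ∧ (∀ c, z (2 * c + 1) = 0) ∧
      aeval shiftTwo F z = 0 := by
  obtain ⟨h, hgh⟩ := hg
  obtain ⟨q, rfl⟩ := hgF
  have hh0 : h ≠ 0 := by rintro rfl; exact X_pow_add_one_ne_zero hs (by rw [hgh, mul_zero])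
  have hdeg := natDegree_lt_of_X_pow_add_one_eq_mul hs hgu hgh
  obtain ⟨ρ, hρdef⟩ : ∃ ρ : ℕ → ZMod 2, ∀ c, ρ c = if 2 * s ∣ c then 1 else 0 := ⟨_, fun _ => rfl⟩
  have hρper : Function.Periodic ρ (2 * s) := fun c => by
    simp only [hρdef, Nat.dvd_add_self_right]
  have hρ : aeval shiftTwo (X ^ s + 1 : (ZMod 2)[X]) ρ = 0 := by
    ext c
    rw [map_add, map_pow, aeval_X, map_one, LinearMap.add_apply, Pi.add_apply,
      shiftTwo_pow_apply, Module.End.one_apply, hρper, CharTwo.add_self_eq_zero, Pi.zero_apply]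
  refine ⟨aeval shiftTwo h ρ, fun hz => ?_, fun c => ?_, fun c => ?_, ?_⟩
  · have := congrFun hz (2 * (s - h.natDegree))
    rw [aeval_shiftTwo_apply, sum_eq_single h.natDegree, Pi.zero_apply] at this
    · simp [hρdef, show 2 * (s - h.natDegree) + 2 * h.natDegree = 2 * s by omega, hh0] at this
    · intro k hk hkd
      rw [hρdef, if_neg, mul_zero]
      exact Nat.not_dvd_of_pos_of_lt (by omega) (by have := mem_range.1 hk; omega)
    · exact fun hd => absurd (mem_range.2 (Nat.lt_succ_self _)) hd
  · simp only [aeval_shiftTwo_apply, add_right_comm c (2 * s),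
      show ∀ m, ρ (m + 2 * s) = ρ m from hρper]
  · rw [aeval_shiftTwo_apply]
    refine sum_eq_zero fun k _ => ?_
    rw [hρdef, if_neg fun hd => by have := (dvd_mul_right 2 s).trans hd; omega, mul_zero]
  · rw [← Module.End.mul_apply, ← map_mul, show g * q * h = q * (X ^ s + 1) by rw [hgh]; ring,
      map_mul, Module.End.mul_apply, hρ, map_zero]

theorem not_injective_gammaComb {s : ℕ} (hs : 0 < s) {F g : (ZMod 2)[X]} (hgF : g ∣ F)
    (hg : g ∣ X ^ s + 1) (hgu : ¬IsUnit g) : ¬Function.Injective (gammaComb F (2 * s)) := by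
  have : NeZero (2 * s) := ⟨by omega⟩
  obtain ⟨z, hz0, hzper, hzodd, hFz⟩ := exists_ne_zero_aeval_shiftTwo_eq_zero hs hgF hg hgu
  have hv : toSeq (fun i : Fin (2 * s) => z i.val) = z := funext fun a => by
    simp only [toSeq, Fin.val_ofNat, hzper.map_mod_nat]
  intro hinj
  have hv0 : (fun i : Fin (2 * s) => z i.val) = 0 := hinj <| toSeq_injective <| by
    rw [toSeq_gammaComb, toSeq_gammaComb, hv, gammaSeqComb_eq_aeval_shiftTwo hzodd, hFz,
      show toSeq (0 : Fin (2 * s) → ZMod 2) = 0 from rfl,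
      gammaSeqComb_eq_aeval_shiftTwo fun _ => rfl, map_zero]
  exact hz0 (by rw [← hv, hv0]; rfl)

theorem bijective_gammaComb_iff_isCoprime {s : ℕ} (hs : 0 < s) {F : (ZMod 2)[X]}
    (hF0 : F.coeff 0 = 1) :
    Function.Bijective (gammaComb F (2 * s)) ↔ IsCoprime F (X ^ s + 1) := by
  refine ⟨fun hbij => ?_, bijective_gammaComb_of_isCoprime_X_pow_add_one hs hF0⟩
  refine isCoprime_of_dvd _ _ (fun h => ?_) fun g hgu _ hgF hg =>
    not_injective_gammaComb hs hgF hg hgu hbij.injective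
  exact X_pow_add_one_ne_zero hs h.2

theorem exists_irreducible_dvd_X_pow_sub_one_iff {K : Type*} [Field K] (t : ℕ) [NeZero (t : K)] :
    ∃ g : K[X], Irreducible g ∧ ∀ ℓ : ℕ, g ∣ X ^ ℓ - 1 ↔ t ∣ ℓ := by
  obtain ⟨ζ, hζ⟩ := HasEnoughRootsOfUnity.exists_primitiveRoot (AlgebraicClosure K) t
  refine ⟨minpoly K ζ, minpoly.irreducible (Algebra.IsIntegral.isIntegral ζ), fun ℓ => ?_⟩
  rw [minpoly.dvd_iff, map_sub, map_pow, aeval_X, map_one, sub_eq_zero, hζ.pow_eq_one_iff_dvd]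

theorem polyOrd_eq {g : (ZMod 2)[X]} {t : ℕ} (ht : 0 < t)
    (hg : ∀ ℓ : ℕ, g ∣ X ^ ℓ + 1 ↔ t ∣ ℓ) : polyOrd g = t :=
  le_antisymm (Nat.sInf_le ⟨ht, (hg t).2 dvd_rfl⟩)
    (le_csInf ⟨t, ht, (hg t).2 dvd_rfl⟩ fun _ ⟨hℓ, hdvd⟩ => Nat.le_of_dvd hℓ ((hg _).1 hdvd))

theorem exists_irreducible_dvd_X_pow_add_one_iff {t : ℕ} (ht : Odd t) :
    ∃ g : (ZMod 2)[X], Irreducible g ∧ ∀ ℓ : ℕ, g ∣ X ^ ℓ + 1 ↔ t ∣ ℓ := by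
  have : NeZero (t : ZMod 2) := ⟨by simp [ZMod.natCast_eq_one_iff_odd.2 ht]⟩
  simpa only [CharTwo.sub_eq_add] using exists_irreducible_dvd_X_pow_sub_one_iff (K := ZMod 2) t

theorem coeff_zero_eq_one_of_dvd {g : (ZMod 2)[X]} {ℓ : ℕ} (hℓ : 0 < ℓ) (hg : g ∣ X ^ ℓ + 1) :
    g.coeff 0 = 1 := by
  obtain ⟨q, hq⟩ := hg
  have := congrArg (fun p => p.coeff 0) hq
  simp only [coeff_add, coeff_X_pow, if_neg hℓ.ne, coeff_one_zero, zero_add, mul_coeff_zero] at this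
  exact (zmod_two_ne_zero_iff _).1 (left_ne_zero_of_mul_eq_one this.symm)

theorem stmt_14 :
    (∀ t : ℕ, 0 < t → Odd t →
      ∃ g : Polynomial (ZMod 2), Irreducible g ∧ polyOrd g = t) ∧
    (∀ T : Finset ℕ, (∀ t ∈ T, 0 < t ∧ Odd t) →
      ∃ F : Polynomial (ZMod 2), F.coeff 0 = 1 ∧
        ∀ n : ℕ, 0 < n →
          (¬ Function.Bijective (gammaComb F n) ↔ ∃ t ∈ T, (2 * t) ∣ n)) := by
  refine ⟨fun t ht hodd => ?_, fun T hT => ?_⟩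
  · obtain ⟨g, hg, hdvd⟩ := exists_irreducible_dvd_X_pow_add_one_iff hodd
    exact ⟨g, hg, polyOrd_eq ht hdvd⟩
  choose! g hirr hdvd using fun t ht => exists_irreducible_dvd_X_pow_add_one_iff (hT t ht).2
  have hF0 : (∏ t ∈ T, g t).coeff 0 = 1 := by
    rw [coeff_zero_prod]
    exact prod_eq_one fun t ht => coeff_zero_eq_one_of_dvd (hT t ht).1 ((hdvd t ht t).2 dvd_rfl)
  refine ⟨∏ t ∈ T, g t, hF0, fun n hn => ?_⟩
  obtain ⟨s, rfl | rfl⟩ := Nat.even_or_odd' n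
  · rw [bijective_gammaComb_iff_isCoprime (by omega) hF0, IsCoprime.prod_left_iff]
    simp only [not_forall, exists_prop]
    refine exists_congr fun t => and_congr_right fun ht => ?_
    rw [(hirr t ht).coprime_iff_not_dvd, not_not, hdvd t ht, Nat.mul_dvd_mul_iff_left two_pos]
  · simp only [bijective_gammaComb_of_odd (odd_two_mul_add_one s) hF0, not_true_eq_false,
      false_iff, not_exists, not_and]
    intro t _ h
    have := (dvd_mul_right 2 t).trans h
    omega
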